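/- arXiv:2203.16679 — 3 statements merged into one kernel-verified Lean document; each statement's English description precedes it below -/
import Mathlib

section
/- Let f: X → Y be a morphism of rank n in a cubical category C. Then every object (X → Z → Y) of Fac(f) lies on a chain of n rank-1 morphisms from the initial object to the terminal object of Fac(f); that is, there are objects Z_n = X, Z_{n−1}, …, Z_1, Z_0 = Y of C, with Z among them, and morphisms Z_j → Z_{j−1} of rank 1 in C composing to f, each Z_j giving a factorization of f, with rk Z_j = rk Y + j. In particular, every morphism of rank n in a cubical category factors as a composition of n rank-1 morphisms. -/
open CategoryTheory

/-- The `n`-cube category: subsets of `{1,…,n}` with inclusions as morphisms. -/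
def CubeCat (n : ℕ) : Type := Finset (Fin n)

instance (n : ℕ) : Category (CubeCat n) :=
  inferInstanceAs (Category (Finset (Fin n)))

/-- The rank of an object of the `n`-cube category: the size of its complement. -/
def cubeRank {n : ℕ} (S : CubeCat n) : ℤ := (n : ℤ) - (S : Finset (Fin n)).card

/-- `t : X ⟶ A` is a first factor of `f : X ⟶ Y` (with respect to the rank function `rk`)
if it has rank 1 and can be completed to a factorization `X → A → Y` of `f`. -/
def IsFirstFactor {C : Type*} [Category C] (rk : C → ℤ) {X Y A : C}
    (f : X ⟶ Y) (t : X ⟶ A) : Prop :=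
  rk X - rk A = 1 ∧ ∃ s : A ⟶ Y, t ≫ s = f

/-- `t : B ⟶ Y` is a last factor of `f : X ⟶ Y` (with respect to the rank function `rk`)
if it has rank 1 and can be completed to a factorization `X → B → Y` of `f`. -/
def IsLastFactor {C : Type*} [Category C] (rk : C → ℤ) {X Y B : C}
    (f : X ⟶ Y) (t : B ⟶ Y) : Prop :=
  rk B - rk Y = 1 ∧ ∃ s : X ⟶ B, s ≫ t = f

/-- A cubical category: a category equipped with a rank function on objects (the rank
of a morphism `f : X ⟶ Y` being `rk X - rk Y`) such that:
(1) all morphisms have nonnegative rank, and rank 0 happens only for identities;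
(2) the factorization category of a rank `n` morphism is isomorphic to the `n`-cube
category, and the middle object functor is an embedding;
(3) a morphism is uniquely determined by its first factors;
(4) a morphism is uniquely determined by its last factors. -/
structure IsCubical (C : Type*) [Category C] (rk : C → ℤ) : Prop where
  rank_nonneg : ∀ {X Y : C} (_ : X ⟶ Y), rk Y ≤ rk X
  rank_zero : ∀ {X Y : C} (f : X ⟶ Y), rk X = rk Y → ∃ h : X = Y, f = eqToHom h
  fac_cube : ∀ {X Y : C} (f : X ⟶ Y),
    ∃ F : CubeCat (rk X - rk Y).toNat ⥤ Factorisation f,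
      F.Full ∧ F.Faithful ∧ Function.Bijective F.obj
  mid_embed_obj : ∀ {X Y : C} (f : X ⟶ Y),
    Function.Injective (fun Z : Factorisation f => Z.mid)
  mid_embed_map : ∀ {X Y : C} (f : X ⟶ Y) {Z Z' : Factorisation f} (g g' : Z ⟶ Z'),
    g.h = g'.h → g = g'
  first_det : ∀ {X Y : C} (f g : X ⟶ Y),
    (∀ (A : C) (t : X ⟶ A), IsFirstFactor rk f t ↔ IsFirstFactor rk g t) → f = g
  last_det : ∀ {X Y : C} (f g : X ⟶ Y),
    (∀ (B : C) (t : B ⟶ Y), IsLastFactor rk f t ↔ IsLastFactor rk g t) → f = g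
/-- The composite of a chain of `n` composable morphisms `obj 0 ⟶ obj 1 ⟶ ⋯ ⟶ obj n`. -/
def chainComp {C : Type*} [Category C] : ∀ {n : ℕ} (obj : Fin (n + 1) → C)
    (_ : ∀ j : Fin n, obj j.castSucc ⟶ obj j.succ), obj 0 ⟶ obj (Fin.last n)
  | 0, obj, _ => eqToHom (congrArg obj (by ext; simp : (0 : Fin 1) = Fin.last 0))
  | n + 1, obj, mor =>
    eqToHom (congrArg obj (by ext; simp : (0 : Fin (n + 2)) = (0 : Fin (n + 1)).castSucc)) ≫
      chainComp (fun i : Fin (n + 1) => obj i.castSucc)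
        (fun j => mor j.castSucc ≫ eqToHom (congrArg obj (Fin.succ_castSucc j))) ≫
      mor (Fin.last n) ≫ eqToHom (congrArg obj (Fin.succ_last n))

/-!
Transport a maximal chain of subsets `∅ = U₀ ⊂ U₁ ⊂ ⋯ ⊂ Uₙ = {1,…,n}` passing through the subset
that corresponds to `Z` along the isomorphism `Iⁿ ≅ Fac(f)`. Its ends are the initial and the
terminal factorisation, because in a cubical category two factorisations with morphisms both ways
between them coincide. Consecutive members of the chain are distinct, so the rank of the middle
object drops strictly at each of the `n` steps; since it drops by `rk X - rk Y = n` in total, each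
step has rank exactly one.
-/

theorem Finset.exists_monotone_card_eq_through {α : Type*} [Fintype α] [DecidableEq α]
    (S : Finset α) :
    ∃ U : ℕ → Finset α, Monotone U ∧ (∀ k ≤ Fintype.card α, (U k).card = k) ∧ U S.card = S := by
  set L := S.toList ++ Sᶜ.toList
  have hL : L.Nodup := List.nodup_append.2 ⟨S.nodup_toList, Sᶜ.nodup_toList,
    fun a ha b hb hab => by simp_all⟩
  have hlen : L.length = Fintype.card α := by simp [L, Finset.card_add_card_compl]
  refine ⟨fun k => (L.take k).toFinset, fun i j hij => ?_, fun k hk => ?_, ?_⟩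
  · intro x hx
    simpa using List.take_subset_take_left L hij (List.mem_toFinset.1 hx)
  · rw [List.toFinset_card_of_nodup ((List.take_sublist k L).nodup hL), List.length_take]
    omega
  · simp [L, List.take_left' (Finset.length_toList S)]

theorem eq_sub_of_forall_succ_lt_of_eq_add {g : ℕ → ℤ} {n : ℕ}
    (hstep : ∀ j < n, g (j + 1) < g j) (htotal : g 0 = g n + n) {j : ℕ} (hj : j ≤ n) :
    g j = g 0 - j := by
  have drop : ∀ i k, i + k ≤ n → g (i + k) + k ≤ g i := by
    intro i k
    induction k with
    | zero => simp
    | succ k ih =>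
      intro hik
      have := hstep (i + k) (by omega)
      rw [← add_assoc]
      push_cast
      linarith [ih (by omega)]
  have h1 := drop 0 j (by omega)
  have h2 := drop j (n - j) (by omega)
  rw [zero_add] at h1
  rw [Nat.add_sub_cancel' hj, Nat.cast_sub hj] at h2
  linarith

section chainComp

variable {C : Type*} [Category C]

theorem eqToHom_comp_of_eq {ι : Sort*} {Y : C} (obj : ι → C) (π : ∀ i, obj i ⟶ Y) {a b : ι}
    (h : a = b) (e : obj a = obj b) : eqToHom e ≫ π b = π a := by
  subst h
  simp

theorem chainComp_comp_eq {Y : C} :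
    ∀ {n : ℕ} (obj : Fin (n + 1) → C) (mor : ∀ j : Fin n, obj j.castSucc ⟶ obj j.succ)
      (π : ∀ i, obj i ⟶ Y), (∀ j, mor j ≫ π j.succ = π j.castSucc) →
      chainComp obj mor ≫ π (Fin.last n) = π 0
  | 0, obj, mor, π, _ => by simp [chainComp]
  | n + 1, obj, mor, π, hπ => by
    simp only [chainComp, Category.assoc]
    rw [eqToHom_comp_of_eq obj π (Fin.succ_last n), hπ,
      chainComp_comp_eq _ _ (fun i => π i.castSucc) fun j => by
        rw [Category.assoc, eqToHom_comp_of_eq obj π (Fin.succ_castSucc j), hπ]]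
    exact eqToHom_comp_of_eq obj π Fin.castSucc_zero.symm _

theorem Factorisation.eqToHom_comp_comp_eqToHom_eq {X Y : C} {f : X ⟶ Y}
    {A B : Factorisation f} (hA : A = Factorisation.initial) (hB : B = Factorisation.terminal)
    {φ : A.mid ⟶ B.mid} (h : φ ≫ B.π = A.π) :
    eqToHom (congrArg Factorisation.mid hA).symm ≫ φ ≫ eqToHom (congrArg Factorisation.mid hB)
      = f := by
  subst hA hB
  simp only [eqToHom_refl, Category.id_comp, Category.comp_id]
  exact (Category.comp_id φ).symm.trans h

end chainComp

def CubeCat.homOfSubset {m : ℕ} {S T : Finset (Fin m)} (h : S ⊆ T) :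
    (S : CubeCat m) ⟶ (T : CubeCat m) :=
  homOfLE h

namespace IsCubical

variable {C : Type*} [Category C] {rk : C → ℤ} {X Y : C} {f : X ⟶ Y}

theorem factorisation_eq_of_rank_eq (hC : IsCubical C rk) {W W' : Factorisation f}
    (g : W ⟶ W') (h : rk W.mid = rk W'.mid) : W = W' :=
  hC.mid_embed_obj f (hC.rank_zero g.h h).1

theorem rank_lt_of_hom_of_ne (hC : IsCubical C rk) {W W' : Factorisation f} (g : W ⟶ W')
    (hne : W ≠ W') : rk W'.mid < rk W.mid :=
  (hC.rank_nonneg g.h).lt_of_ne fun h => hne (hC.factorisation_eq_of_rank_eq g h.symm)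

theorem factorisation_antisymm (hC : IsCubical C rk) {W W' : Factorisation f} (g : W ⟶ W')
    (g' : W' ⟶ W) : W = W' :=
  hC.factorisation_eq_of_rank_eq g (le_antisymm (hC.rank_nonneg g'.h) (hC.rank_nonneg g.h))

theorem obj_empty_eq_initial (hC : IsCubical C rk) {m : ℕ} (F : CubeCat m ⥤ Factorisation f)
    (hF : Function.Surjective F.obj) : F.obj (∅ : Finset (Fin m)) = Factorisation.initial := by
  obtain ⟨S, hS⟩ := hF Factorisation.initial
  exact hC.factorisation_antisymm (F.map (CubeCat.homOfSubset S.empty_subset) ≫ eqToHom hS)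
    (Factorisation.initialHom _)

theorem obj_univ_eq_terminal (hC : IsCubical C rk) {m : ℕ} (F : CubeCat m ⥤ Factorisation f)
    (hF : Function.Surjective F.obj) :
    F.obj (Finset.univ : Finset (Fin m)) = Factorisation.terminal := by
  obtain ⟨S, hS⟩ := hF Factorisation.terminal
  exact (hC.factorisation_antisymm
    (eqToHom hS.symm ≫ F.map (CubeCat.homOfSubset S.subset_univ))
    (Factorisation.terminalHom _)).symm

theorem exists_chain_through (hC : IsCubical C rk) (f : X ⟶ Y) {n : ℕ}
    (hn : (n : ℤ) = rk X - rk Y) (Z : Factorisation f) :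
    ∃ (e : ℕ → Factorisation f) (_ : ∀ a b, a ≤ b → (e a ⟶ e b)),
      e 0 = Factorisation.initial ∧ e n = Factorisation.terminal ∧ (∃ k ≤ n, e k = Z) ∧
      ∀ k ≤ n, rk (e k).mid = rk X - k := by
  obtain ⟨F, -, -, hF⟩ := hC.fac_cube f
  obtain rfl : n = (rk X - rk Y).toNat := by omega
  obtain ⟨S, rfl⟩ := hF.2 Z
  obtain ⟨U, hU, hUcard, hUS⟩ := Finset.exists_monotone_card_eq_through (S : Finset (Fin _))
  rw [Fintype.card_fin] at hUcard
  let e k := F.obj (U k)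
  have he0 : e 0 = Factorisation.initial := by
    rw [← hC.obj_empty_eq_initial F hF.2, ← Finset.card_eq_zero.1 (hUcard 0 (Nat.zero_le _))]
  have hen : e (rk X - rk Y).toNat = Factorisation.terminal := by
    rw [← hC.obj_univ_eq_terminal F hF.2,
      ← Finset.eq_univ_of_card (U _) ((hUcard _ le_rfl).trans (Fintype.card_fin _).symm)]
  have hstep : ∀ j < (rk X - rk Y).toNat, rk (e (j + 1)).mid < rk (e j).mid := fun j hj =>
    hC.rank_lt_of_hom_of_ne (F.map (CubeCat.homOfSubset (hU j.le_succ))) fun h => by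
      have := congrArg Finset.card (hF.1 h)
      rw [hUcard j hj.le, hUcard (j + 1) hj] at this
      omega
  refine ⟨e, fun a b h => F.map (CubeCat.homOfSubset (hU h)), he0, hen,
    ⟨S.card, (Finset.card_le_univ _).trans_eq (Fintype.card_fin _), by simp only [e, hUS]⟩,
    fun k hk => ?_⟩
  have htotal : rk (e 0).mid = rk (e (rk X - rk Y).toNat).mid + (rk X - rk Y).toNat := by
    simp only [he0, hen, Factorisation.initial_mid, Factorisation.terminal_mid]
    omega
  rw [eq_sub_of_forall_succ_lt_of_eq_add (g := fun k => rk (e k).mid) hstep htotal hk, he0]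
  rfl

end IsCubical

/-- Every object of `Fac(f)`, for `f : X ⟶ Y` of rank `n` in a cubical
category, lies on a chain of `n` rank-1 morphisms from the initial object to the terminal
object of `Fac(f)`; the object `Z_j` of the chain has rank `rk Y + j`.  In particular,
every morphism of rank `n` in a cubical category factors as a composition of `n` rank-1
morphisms. -/
theorem stmt3 {C : Type*} [Category C] (rk : C → ℤ) (hC : IsCubical C rk)
    {X Y : C} (f : X ⟶ Y) (n : ℕ) (hn : (n : ℤ) = rk X - rk Y) (Z : Factorisation f) :
    (∃ (c : Fin (n + 1) → Factorisation f)
        (_ : ∀ j : Fin n, c j.succ ⟶ c j.castSucc),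
      c (Fin.last n) = ({ mid := X, ι := 𝟙 X, π := f, ι_π := Category.id_comp f } :
          Factorisation f) ∧
      c 0 = ({ mid := Y, ι := f, π := 𝟙 Y, ι_π := Category.comp_id f } : Factorisation f) ∧
      (∃ k : Fin (n + 1), c k = Z) ∧
      (∀ j : Fin (n + 1), rk (c j).mid = rk Y + (j : ℕ)) ∧
      (∀ j : Fin n, rk (c j.succ).mid - rk (c j.castSucc).mid = 1)) ∧
    (∃ (obj : Fin (n + 1) → C) (mor : ∀ j : Fin n, obj j.castSucc ⟶ obj j.succ)
        (h0 : obj 0 = X) (hl : obj (Fin.last n) = Y),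
      (∀ j : Fin n, rk (obj j.castSucc) - rk (obj j.succ) = 1) ∧
      eqToHom h0.symm ≫ chainComp obj mor ≫ eqToHom hl = f) := by
  obtain ⟨e, hom, he0, hen, ⟨k, hk, rfl⟩, hrk⟩ := hC.exists_chain_through f hn Z
  have hrk_rev : ∀ j ≤ n, rk (e (n - j)).mid = rk Y + j := fun j hj => by
    rw [hrk _ (Nat.sub_le n j)]
    omega
  refine ⟨⟨fun i => e (n - i), fun j => hom _ _ (Nat.sub_le_sub_left (Nat.le_succ j) n),
      by simp only [Fin.val_last, Nat.sub_self]; exact he0,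
      by simp only [Fin.val_zero, Nat.sub_zero]; exact hen,
      ⟨⟨n - k, by omega⟩, by simp [Nat.sub_sub_self hk]⟩,
      fun j => hrk_rev j (by omega), fun j => ?_⟩,
    ⟨fun i => (e i).mid, fun j => (hom j (j + 1) (Nat.le_succ j)).h, congrArg _ he0,
      congrArg _ hen, fun j => ?_, ?_⟩⟩
  · show rk (e (n - j.succ)).mid - rk (e (n - j.castSucc)).mid = 1
    rw [hrk_rev _ j.succ.is_le, hrk_rev _ j.castSucc.is_le]
    simp
  · show rk (e j).mid - rk (e (j + 1)).mid = 1
    rw [hrk j (by omega), hrk (j + 1) j.isLt]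
    push_cast
    ring
  · exact Factorisation.eqToHom_comp_comp_eqToHom_eq he0 hen
      (chainComp_comp_eq _ _ (fun i => (e i).π) fun j => (hom _ _ _).h_π)
end

section
/- Let Λ be a finite-dimensional hereditary algebra of finite representation type over a field. Let M_1, …, M_k be exceptional Λ-modules that are pairwise Hom-orthogonal and such that for each pair i ≠ j, at least one of (M_i, M_j) and (M_j, M_i) is an exceptional pair (equivalently, Ext^1_Λ vanishes in at least one direction between M_i and M_j). Then there is a permutation σ of {1,…,k} such that (M_{σ(1)}, …, M_{σ(k)}) is an exceptional sequence. -/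
/-!
Suppose no `M m` satisfies `Ext¹(M j, M m) = 0` for all `j ≠ m`. Then there is an infinite walk
`v₀, v₁, …` with `Ext¹(M v_{t+1}, M v_t) ≠ 0` at every step. Since `Λ` is hereditary, `Ext¹(B, -)`
is right exact, so a non-split extension of `M v_{t+1}` by `M v_t` lifts along any epimorphism
`T ↠ M v_t` to an extension of `M v_{t+1}` by `T`. Starting from `T = M v₀` and iterating gives
modules of unbounded length, and Hom-orthogonality together with the division-ring endomorphism
rings of the `M i` keeps each of them indecomposable. Finite representation type bounds the
lengths of the indecomposables, a contradiction. So some `M m` can be put first, and the rest is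
ordered by induction.
-/

open CategoryTheory

/-- `Hom_Λ(A,B) = 0`. -/
def homZero {Λ : Type} [Ring Λ] (A B : ModuleCat.{0} Λ) : Prop := ∀ f : A ⟶ B, f = 0

/-- `Ext¹_Λ(A,B) = 0`, phrased as: every short exact sequence `0 → B → E → A → 0` splits. -/
def ext1Zero {Λ : Type} [Ring Λ] (A B : ModuleCat.{0} Λ) : Prop :=
  ∀ (E : ModuleCat.{0} Λ) (i : B ⟶ E) (p : E ⟶ A),
    Function.Injective i → Function.Surjective p → LinearMap.range i.hom = LinearMap.ker p.hom →
      ∃ s : A ⟶ E, s ≫ p = 𝟙 A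

/-- A module is exceptional if it is finite dimensional, rigid (`Ext¹(E,E)=0`) and a brick
(its endomorphism ring is a division algebra). -/
def IsExceptional {Λ : Type} [Ring Λ] (M : ModuleCat.{0} Λ) : Prop :=
  Module.Finite Λ M ∧ ext1Zero M M ∧ ((0 : End M) ≠ 1) ∧ ∀ f : End M, f ≠ 0 → IsUnit f

/-- `(A, B)` is an exceptional pair: both are exceptional and `Hom(B,A) = 0 = Ext¹(B,A)`. -/
def ExcPair {Λ : Type} [Ring Λ] (A B : ModuleCat.{0} Λ) : Prop :=
  homZero B A ∧ ext1Zero B A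

/-- Hom-orthogonality of a pair of modules. -/
def HomOrth {Λ : Type} [Ring Λ] (A B : ModuleCat.{0} Λ) : Prop :=
  homZero A B ∧ homZero B A

/-- An hereditary ring: submodules of projective modules are projective. -/
def IsHereditary (Λ : Type) [Ring Λ] : Prop :=
  ∀ M : ModuleCat.{0} Λ, Module.Projective Λ M → ∀ N : Submodule Λ M, Module.Projective Λ N

/-- An indecomposable (nonzero) module: the only idempotent endomorphisms are `0` and `1`. -/
def Indec {Λ : Type} [Ring Λ] (M : ModuleCat.{0} Λ) : Prop :=
  ((0 : End M) ≠ 1) ∧ ∀ f : End M, f * f = f → f = 0 ∨ f = 1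

/-- Finite representation type: finitely many isomorphism classes of finite-dimensional
indecomposable modules. -/
def FiniteRepType (Λ : Type) [Ring Λ] : Prop :=
  ∃ (N : ℕ) (rep : Fin N → ModuleCat.{0} Λ),
    ∀ M : ModuleCat.{0} Λ, Module.Finite Λ M → Indec M → ∃ i, Nonempty (M ≅ rep i)

section

variable {Λ : Type} [Ring Λ]

lemma Indec.of_isExceptional {X : ModuleCat.{0} Λ} (h : IsExceptional X) : Indec X := by
  refine ⟨h.2.2.1, fun f hf => or_iff_not_imp_left.2 fun hf0 => ?_⟩
  obtain ⟨u, rfl⟩ := h.2.2.2 f hf0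
  have := congrArg ((↑u⁻¹ : End X) * ·) hf
  rwa [← mul_assoc, u.inv_mul, one_mul] at this

lemma IsExceptional.nontrivial {X : ModuleCat.{0} Λ} (h : IsExceptional X) : Nontrivial X := by
  by_contra hX
  rw [not_nontrivial_iff_subsingleton] at hX
  exact h.2.2.1 (ModuleCat.hom_ext (LinearMap.ext fun _ => Subsingleton.elim _ _))

lemma ModuleCat.shortExact_mk {A B C : ModuleCat.{0} Λ} {i : A ⟶ B} {q : B ⟶ C}
    (hi : Function.Injective i) (hq : Function.Surjective q) (h : Function.Exact i q) :
    (ShortComplex.mk i q (by ext x; exact h.apply_apply_eq_zero x)).ShortExact :=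
  .mk' ((ShortComplex.ShortExact.moduleCat_exact_iff_function_exact _).2 h)
    ((ModuleCat.mono_iff_injective _).2 hi) ((ModuleCat.epi_iff_surjective _).2 hq)

lemma exists_shortExact_of_not_ext1Zero {A B : ModuleCat.{0} Λ} (h : ¬ ext1Zero B A) :
    ∃ (E : ModuleCat.{0} Λ) (i : A ⟶ E) (q : E ⟶ B) (w : i ≫ q = 0),
      (ShortComplex.mk i q w).ShortExact ∧ ∀ s : B ⟶ E, s ≫ q ≠ 𝟙 B := by
  simp only [ext1Zero, not_forall, not_exists] at h
  obtain ⟨E, i, q, hi, hq, hiq, nonsplit⟩ := h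
  exact ⟨E, i, q, _, ModuleCat.shortExact_mk hi hq (LinearMap.exact_iff.2 hiq.symm), nonsplit⟩

namespace CategoryTheory.ShortComplex.ShortExact

theorem comp_ne_τ₁ {C : Type*} [Category C] [Abelian C] {S S' : ShortComplex C}
    (hS' : S'.ShortExact) (φ : S' ⟶ S) [IsIso φ.τ₃]
    (nonsplit : ∀ s : S.X₃ ⟶ S.X₂, s ≫ S.g ≠ 𝟙 S.X₃) (r : S'.X₂ ⟶ S.X₁) :
    S'.f ≫ r ≠ φ.τ₁ := by
  intro hr
  have := hS'.epi_g
  obtain ⟨σ, hσ⟩ := hS'.exact.desc' (φ.τ₂ - r ≫ S.f)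
    (by rw [Preadditive.comp_sub, reassoc_of% hr, φ.comm₁₂, sub_self])
  refine nonsplit (inv φ.τ₃ ≫ σ) ?_
  rw [Category.assoc, IsIso.inv_comp_eq, Category.comp_id, ← cancel_epi S'.g, reassoc_of% hσ]
  simp [φ.comm₂₃]

variable {S : ShortComplex (ModuleCat.{0} Λ)} (hS : S.ShortExact)
include hS

lemma eq_zero_of_idem {e : S.X₂ ⟶ S.X₂} (he : e ≫ e = e) (hf : S.f ≫ e = 0)
    (hg : e ≫ S.g = 0) : e = 0 := by
  have := hS.mono_f
  have := hS.epi_g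
  obtain ⟨w, rfl⟩ := hS.exact.lift' e hg
  have hw : S.f ≫ w = 0 := by rw [← cancel_mono S.f]; simpa using hf
  obtain ⟨w', rfl⟩ := hS.exact.desc' w hw
  simpa using he.symm

lemma exists_retraction {e : S.X₂ ⟶ S.X₂} (hf : S.f ≫ e = S.f) (hg : e ≫ S.g = 0) :
    ∃ r : S.X₂ ⟶ S.X₁, S.f ≫ r = 𝟙 S.X₁ := by
  have := hS.mono_f
  obtain ⟨w, rfl⟩ := hS.exact.lift' e hg
  exact ⟨w, by rw [← cancel_mono S.f]; simpa using hf⟩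

theorem indec_X₂ (h₁ : Indec S.X₁) (h₃ : Indec S.X₃) (hom : homZero S.X₁ S.X₃)
    (nonsplit : ∀ r : S.X₂ ⟶ S.X₁, S.f ≫ r ≠ 𝟙 S.X₁) : Indec S.X₂ := by
  have := hS.mono_f
  have := hS.epi_g
  refine ⟨fun h => h₁.1 ?_, fun (f : S.X₂ ⟶ S.X₂) (hf : f ≫ f = f) => ?_⟩
  · rw [← cancel_mono S.f]; simpa using congrArg (S.f ≫ ·) h
  have hf' : (𝟙 _ - f) ≫ (𝟙 _ - f) = 𝟙 _ - f := by simp [hf]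
  -- `f` restricts to `ft` on `X₁` and induces `fb` on `X₃`, each `0` or `1`; the two mixed
  -- cases would split `S`
  obtain ⟨ft, hft⟩ := hS.exact.lift' (S.f ≫ f) (hom _)
  have hfg : S.f ≫ f ≫ S.g = 0 := by
    rw [← Category.assoc, ← hft, Category.assoc, S.zero, Limits.comp_zero]
  obtain ⟨fb, hfb⟩ := hS.exact.desc' (f ≫ S.g) hfg
  have hft_idem : ft ≫ ft = ft := by
    rw [← cancel_mono S.f]; simp [hft, reassoc_of% hft, hf]
  have hfb_idem : fb ≫ fb = fb := by
    rw [← cancel_epi S.g]; simp [reassoc_of% hfb, hfb, reassoc_of% hf]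
  rcases h₁.2 ft hft_idem with rfl | rfl <;> rcases h₃.2 fb hfb_idem with rfl | rfl
  · exact .inl (hS.eq_zero_of_idem hf (by simpa using hft.symm) (by simpa using hfb.symm))
  · obtain ⟨r, hr⟩ := hS.exists_retraction (e := 𝟙 _ - f) (by simp [← hft]) (by simp [← hfb])
    exact (nonsplit r hr).elim
  · obtain ⟨r, hr⟩ := hS.exists_retraction (by simpa using hft.symm) (by simpa using hfb.symm)
    exact (nonsplit r hr).elim
  · exact .inr (sub_eq_zero.1 (hS.eq_zero_of_idem hf' (by simp [← hft]) (by simp [← hfb]))).symm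

end CategoryTheory.ShortComplex.ShortExact

theorem LinearMap.exists_exact_pushout {T P B : Type} [AddCommGroup T] [AddCommGroup P]
    [AddCommGroup B] [Module Λ T] [Module Λ P] [Module Λ B] {π₀ : P →ₗ[Λ] B}
    (hπ₀ : Function.Surjective π₀) (χ : LinearMap.ker π₀ →ₗ[Λ] T) :
    let U := LinearMap.range (χ.prod (-(LinearMap.ker π₀).subtype))
    ∃ π : ((T × P) ⧸ U) →ₗ[Λ] B, π ∘ₗ U.mkQ = π₀ ∘ₗ LinearMap.snd Λ T P ∧
      Function.Injective (U.mkQ ∘ₗ LinearMap.inl Λ T P) ∧ Function.Surjective π ∧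
      Function.Exact (U.mkQ ∘ₗ LinearMap.inl Λ T P) π := by
  intro U
  let π := U.liftQ (π₀ ∘ₗ LinearMap.snd Λ T P) (by rintro _ ⟨κ, rfl⟩; simp)
  refine ⟨π, rfl, ?_, fun y => ?_, fun y => ⟨fun hy => ?_, ?_⟩⟩
  · refine (injective_iff_map_eq_zero _).2 fun t ht => ?_
    obtain ⟨κ, hκ⟩ := (Submodule.Quotient.mk_eq_zero U).1 ht
    obtain ⟨rfl, hκ0⟩ := Prod.ext_iff.1 hκ
    have : κ = 0 := Subtype.ext (neg_eq_zero.1 hκ0)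
    simp [this]
  · obtain ⟨x, rfl⟩ := hπ₀ y
    exact ⟨U.mkQ (0, x), rfl⟩
  · obtain ⟨⟨t, x⟩, rfl⟩ := U.mkQ_surjective y
    have hx : x ∈ LinearMap.ker π₀ := hy
    exact ⟨t + χ ⟨x, hx⟩, (Submodule.Quotient.eq U).2 ⟨⟨x, hx⟩, by simp⟩⟩
  · rintro ⟨t, rfl⟩
    simp [π]

theorem IsHereditary.exists_shortExact_map_of_surjective (hered : IsHereditary Λ)
    {S : ShortComplex (ModuleCat.{0} Λ)} (hS : S.ShortExact) {T : ModuleCat.{0} Λ}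
    (p : T ⟶ S.X₁) (hp : Function.Surjective p) :
    ∃ (Q : ModuleCat.{0} Λ) (ι : T ⟶ Q) (π : Q ⟶ S.X₃) (w : ι ≫ π = 0),
      (ShortComplex.mk ι π w).ShortExact ∧
        ∃ φ : ShortComplex.mk ι π w ⟶ S, φ.τ₁ = p ∧ φ.τ₃ = 𝟙 S.X₃ := by
  have := hS.mono_f
  -- `Q` is the pushout of `0 → K → Λ^(X₃) → X₃ → 0` along a map `χ : K → T`, which exists
  -- because `K` is projective
  let π₀ := Finsupp.linearCombination Λ (id : S.X₃ → S.X₃)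
  let K := LinearMap.ker π₀
  have : Module.Projective Λ K := hered (.of Λ (S.X₃ →₀ Λ)) inferInstance K
  obtain ⟨φ, hφ⟩ := Module.projective_lifting_property S.g.hom π₀ hS.moduleCat_surjective_g
  obtain ⟨ψ, hψ⟩ := hS.exact.lift' (ModuleCat.ofHom (φ ∘ₗ K.subtype) : ModuleCat.of Λ K ⟶ S.X₂)
    (by ext κ; simp [hφ])
  obtain ⟨χ, hχ⟩ := Module.projective_lifting_property p.hom ψ.hom hp
  obtain ⟨π, hπ, hι, hπ_surj, hex⟩ :=
    LinearMap.exists_exact_pushout (Finsupp.linearCombination_id_surjective Λ S.X₃) χ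
  let U := LinearMap.range (χ.prod (-K.subtype))
  let α := U.liftQ ((S.f.hom ∘ₗ p.hom).coprod φ) (by
    rintro _ ⟨κ, rfl⟩
    have := congr(ModuleCat.Hom.hom $hψ κ)
    simp only [ModuleCat.hom_comp, ModuleCat.hom_ofHom, LinearMap.comp_apply, ← hχ] at this
    simp [this])
  refine ⟨.of Λ (_ ⧸ U), ModuleCat.ofHom (U.mkQ ∘ₗ LinearMap.inl Λ T _), ModuleCat.ofHom π, _,
    ModuleCat.shortExact_mk hι hπ_surj hex, ⟨p, ModuleCat.ofHom α, 𝟙 _, ?_, ?_⟩, rfl, rfl⟩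
  · ext; simp [α]
  · ext1
    refine U.linearMap_qext (LinearMap.prod_ext ?_ ?_)
    · ext t; simpa [α] using (LinearMap.congr_fun hπ (t, 0)).symm
    · refine LinearMap.ext fun x => ?_
      simpa [α] using (LinearMap.congr_fun hφ x).trans (LinearMap.congr_fun hπ (0, x)).symm

/-- `T` is an iterated non-split extension along a walk of the `M i` ending at `v`; the two Hom
conditions are the invariants that keep the next extension indecomposable. -/
structure Tower {ι : Type*} (M : ι → ModuleCat.{0} Λ) (v : ι) where
  T : ModuleCat.{0} Λ
  p : T ⟶ M v
  finite : Module.Finite Λ T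
  indec : Indec T
  surjective : Function.Surjective p
  homZero_of_ne : ∀ w, w ≠ v → homZero T (M w)
  exists_eq_comp : ∀ h : T ⟶ M v, ∃ e : M v ⟶ M v, h = p ≫ e

namespace Tower

variable {ι : Type*} {M : ι → ModuleCat.{0} Λ} (hexc : ∀ i, IsExceptional (M i))
  (horth : ∀ i j, i ≠ j → HomOrth (M i) (M j))
include hexc horth

def base (v : ι) : Tower M v where
  T := M v
  p := 𝟙 (M v)
  finite := (hexc v).1
  indec := .of_isExceptional (hexc v)
  surjective := Function.surjective_id
  homZero_of_ne w hw := (horth v w hw.symm).1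
  exists_eq_comp h := ⟨h, (Category.id_comp h).symm⟩

theorem exists_extend (hered : IsHereditary Λ) {a b : ι} (s : Tower M a) (hab : a ≠ b)
    (hext : ¬ ext1Zero (M b) (M a)) :
    ∃ s' : Tower M b, Module.length Λ s'.T = Module.length Λ s.T + Module.length Λ (M b) := by
  obtain ⟨_, _, _, _, hW, nonsplit⟩ := exists_shortExact_of_not_ext1Zero hext
  obtain ⟨Q, ι, π, _, hS, φ, hφ₁, hφ₃⟩ :=
    hered.exists_shortExact_map_of_surjective hW s.p s.surjective
  have : IsIso φ.τ₃ := hφ₃ ▸ inferInstance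
  have hp : ∀ r : Q ⟶ M a, ι ≫ r ≠ s.p := hφ₁ ▸ hS.comp_ne_τ₁ φ nonsplit
  have := hS.epi_g
  have hQ : ∀ v, v ≠ b → homZero Q (M v) := by
    intro v hv g
    have hιg : ι ≫ g = 0 := by
      by_cases hva : v = a
      · subst hva
        -- otherwise `ι ≫ g = s.p ≫ u` with `u` invertible, and `g ≫ u⁻¹` would extend `s.p`
        obtain ⟨e, he⟩ := s.exists_eq_comp (ι ≫ g)
        by_contra hne
        obtain ⟨u, rfl⟩ := (hexc v).2.2.2 e (by rintro rfl; simp_all)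
        refine hp (g ≫ (↑u⁻¹ : End (M v))) ?_
        rw [reassoc_of% he, ← End.mul_def, u.inv_mul, End.one_def, Category.comp_id]
      · exact s.homZero_of_ne v hva _
    obtain ⟨g', rfl⟩ := hS.exact.desc' g hιg
    rw [(horth b v (Ne.symm hv)).1 g', Limits.comp_zero]
  have hex := (ShortComplex.ShortExact.moduleCat_exact_iff_function_exact _).1 hS.exact
  have := s.finite
  have := (hexc b).1
  refine ⟨⟨Q, π, .of_exact hex hS.moduleCat_surjective_g, ?_, hS.moduleCat_surjective_g, hQ,
    fun h => ?_⟩, ?_⟩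
  · exact hS.indec_X₂ s.indec (.of_isExceptional (hexc b)) (s.homZero_of_ne b hab.symm)
      fun r hr => hp (r ≫ s.p) (by simp [reassoc_of% hr])
  · exact (hS.exact.desc' h (s.homZero_of_ne b hab.symm _)).imp fun e he => he.symm
  · exact Module.length_eq_add_of_exact _ _ hS.moduleCat_injective_f hS.moduleCat_surjective_g hex

theorem exists_length_ge (hered : IsHereditary Λ) (c : ℕ → ι)
    (hc : ∀ t, c t ≠ c (t + 1) ∧ ¬ ext1Zero (M (c (t + 1))) (M (c t))) (t : ℕ) :
    ∃ s : Tower M (c t), (t + 1 : ℕ∞) ≤ Module.length Λ s.T := by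
  have hpos : ∀ v, 1 ≤ Module.length Λ (M v) := fun v =>
    have := (hexc v).nontrivial
    Order.one_le_iff_pos.2 Module.length_pos
  induction t with
  | zero =>
    rw [Nat.cast_zero, zero_add]
    exact ⟨base hexc horth (c 0), hpos (c 0)⟩
  | succ t ih =>
    obtain ⟨s, hs⟩ := ih
    obtain ⟨s', hs'⟩ := s.exists_extend hexc horth hered (hc t).1 (hc t).2
    refine ⟨s', ?_⟩
    rw [hs', Nat.cast_succ]
    exact add_le_add hs (hpos _)

end Tower

theorem FiniteRepType.exists_length_le [IsArtinianRing Λ] (h : FiniteRepType Λ) :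
    ∃ B : ℕ, ∀ X : ModuleCat.{0} Λ, Module.Finite Λ X → Indec X → Module.length Λ X ≤ B := by
  obtain ⟨N, rep, hrep⟩ := h
  refine ⟨∑ i, (Module.length Λ (rep i)).toNat, fun X hX hind => ?_⟩
  obtain ⟨i, ⟨e⟩⟩ := hrep X hX hind
  rw [← ENat.natCast_toNat Module.length_ne_top, e.toLinearEquiv.length_eq, Nat.cast_le]
  exact Finset.single_le_sum (f := fun j => (Module.length Λ (rep j)).toNat)
    (fun _ _ => Nat.zero_le _) (Finset.mem_univ i)

theorem exists_forall_ext1Zero_of_homOrth [IsArtinianRing Λ] (hered : IsHereditary Λ)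
    (hfin : FiniteRepType Λ) {ι : Type*} [Nonempty ι] (M : ι → ModuleCat.{0} Λ)
    (hexc : ∀ i, IsExceptional (M i)) (horth : ∀ i j, i ≠ j → HomOrth (M i) (M j)) :
    ∃ m, ∀ j, j ≠ m → ext1Zero (M j) (M m) := by
  by_contra h
  simp only [not_exists, not_forall] at h
  choose next hne hext using h
  obtain ⟨B, hB⟩ := hfin.exists_length_le
  let c t := next^[t] (Classical.arbitrary ι)
  have hc : ∀ t, c (t + 1) = next (c t) := fun t => Function.iterate_succ_apply' ..
  obtain ⟨s, hs⟩ := Tower.exists_length_ge hexc horth hered c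
    (fun t => hc t ▸ ⟨(hne _).symm, hext _⟩) B
  have := s.finite
  exact absurd (hs.trans (hB s.T s.finite s.indec)) (by norm_cast; omega)

end

theorem Fin.exists_perm_forall_lt_of_exists_first {α : Type*} (r : α → α → Prop)
    (P : ∀ {n : ℕ}, (Fin n → α) → Prop)
    (hP : ∀ {n} {f : Fin (n + 1) → α}, P f → ∀ m : Fin (n + 1), P (f ∘ m.succAbove))
    (hfirst : ∀ {n} {f : Fin (n + 1) → α}, P f → ∃ m, ∀ j, j ≠ m → r (f m) (f j)) :
    ∀ {k} (f : Fin k → α), P f → ∃ σ : Equiv.Perm (Fin k), ∀ i j, i < j → r (f (σ i)) (f (σ j))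
  | 0, _, _ => ⟨1, fun i => i.elim0⟩
  | k + 1, f, hf => by
    obtain ⟨m, hm⟩ := hfirst hf
    obtain ⟨σ, hσ⟩ := exists_perm_forall_lt_of_exists_first r P hP hfirst _ (hP hf m)
    let τ := (finSuccEquiv k).trans ((Equiv.optionCongr σ).trans (finSuccEquiv' m).symm)
    have hτ0 : τ 0 = m := by simp [τ]
    have hτs : ∀ i, τ i.succ = m.succAbove (σ i) := by simp [τ]
    refine ⟨τ, fun i j hij => ?_⟩
    induction j using Fin.cases with
    | zero => exact absurd hij (Fin.not_lt_zero i)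
    | succ j =>
      induction i using Fin.cases with
      | zero => exact hτ0 ▸ hτs j ▸ hm _ (Fin.succAbove_ne m (σ j))
      | succ i => exact hτs i ▸ hτs j ▸ hσ i j (Fin.succ_lt_succ_iff.1 hij)

theorem stmt10_general (K Λ : Type) [Field K] [Ring Λ] [Algebra K Λ] [FiniteDimensional K Λ]
    (hered : IsHereditary Λ) (hfin : FiniteRepType Λ)
    (k : ℕ) (M : Fin k → ModuleCat.{0} Λ)
    (hexc : ∀ i, IsExceptional (M i))
    (horth : ∀ i j, i ≠ j → HomOrth (M i) (M j)) :
    ∃ σ : Equiv.Perm (Fin k), ∀ i j : Fin k, i < j → ExcPair (M (σ i)) (M (σ j)) := by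
  have := IsArtinianRing.of_finite K Λ
  refine Fin.exists_perm_forall_lt_of_exists_first ExcPair
    (fun N => (∀ i, IsExceptional (N i)) ∧ ∀ i j, i ≠ j → HomOrth (N i) (N j)) ?_ ?_ M
    ⟨hexc, horth⟩
  · exact fun ⟨hexc, horth⟩ m =>
      ⟨fun i => hexc _, fun i j hij => horth _ _ (Fin.succAbove_right_injective.ne hij)⟩
  · rintro n N ⟨hexc, horth⟩
    obtain ⟨m, hm⟩ := exists_forall_ext1Zero_of_homOrth hered hfin N hexc horth
    exact ⟨m, fun j hj => ⟨(horth j m hj).1, hm j hj⟩⟩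

/-- Over a finite-dimensional hereditary algebra of finite representation
type, pairwise Hom-orthogonal exceptional modules, any two of which form an exceptional pair
in at least one order, can be arranged into an exceptional sequence. -/
theorem stmt10 (K Λ : Type) [Field K] [Ring Λ] [Algebra K Λ] [FiniteDimensional K Λ]
    (hered : IsHereditary Λ) (hfin : FiniteRepType Λ)
    (k : ℕ) (M : Fin k → ModuleCat.{0} Λ)
    (hexc : ∀ i, IsExceptional (M i))
    (horth : ∀ i j, i ≠ j → HomOrth (M i) (M j))
    (hpair : ∀ i j, i ≠ j → ExcPair (M i) (M j) ∨ ExcPair (M j) (M i)) :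
    ∃ σ : Equiv.Perm (Fin k), ∀ i j : Fin k, i < j → ExcPair (M (σ i)) (M (σ j)) :=
  stmt10_general K Λ hered hfin k M hexc horth
end

section
/- Let Λ be a finite-dimensional hereditary algebra of finite representation type over a field. Let M_1, …, M_k and N_1, …, N_l be exceptional Λ-modules such that: the M_i are pairwise Hom-orthogonal and every pair among them forms an exceptional pair in at least one order; the N_j are pairwise Hom-orthogonal and every pair among them forms an exceptional pair in at least one order; and (M_i, N_j) is an exceptional pair for every i and j. Then there are permutations σ of {1,…,k} and τ of {1,…,l} such that (M_{σ(1)}, …, M_{σ(k)}, N_{τ(1)}, …, N_{τ(l)}) is an exceptional sequence, i.e., the modules can be arranged in an exceptional sequence with all of the N's to the right of all of the M's. -/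
/-!
Order each family so that a later module never admits a nonzero `Ext¹` into an earlier one.
For Hom-orthogonal modules `(M i, M i')` fails to be an exceptional pair exactly when
`Ext¹(M i', M i) ≠ 0`, so it suffices that these non-vanishings admit no infinite walk
`c 0, c 1, …`: the relation is then well founded and sorting by rank gives the order.
Along such a walk, right exactness of `Ext¹(B, -)` over a hereditary algebra yields iterated
non-split extensions `X (n + 1)` of `M (c (n + 1))` by `X n`. Hom-orthogonality and the
division endomorphism rings of the `M i` keep every `X n` indecomposable, while the lengths
strictly increase, so infinitely many indecomposables would be pairwise non-isomorphic.
-/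

open CategoryTheory

section Exceptional

variable {Λ : Type} [Ring Λ] {E : ModuleCat.{0} Λ}

lemma IsExceptional.nontrivial_s11 (hE : IsExceptional E) : Nontrivial E := by
  by_contra h
  rw [not_nontrivial_iff_subsingleton] at h
  exact hE.2.2.1 (ModuleCat.hom_ext (LinearMap.ext fun _ => Subsingleton.elim _ _))

lemma IsExceptional.eq_zero_or_eq_one_of_idem (hE : IsExceptional E)
    {u : End E} (hu : u ≫ u = u) : u = 0 ∨ u = 1 :=
  or_iff_not_imp_left.mpr fun h0 => (IsIdempotentElem.iff_eq_one_of_isUnit (hE.2.2.2 u h0)).mp hu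

end Exceptional

namespace HereditaryExceptional

variable {Λ : Type} [Ring Λ]

structure IsSES {A E B : ModuleCat.{0} Λ} (i : A ⟶ E) (p : E ⟶ B) : Prop where
  injective : Function.Injective i
  surjective : Function.Surjective p
  range_eq_ker : LinearMap.range i.hom = LinearMap.ker p.hom

lemma not_ext1Zero_iff {A B : ModuleCat.{0} Λ} :
    ¬ ext1Zero B A ↔ ∃ (E : ModuleCat.{0} Λ) (i : A ⟶ E) (p : E ⟶ B),
      IsSES i p ∧ ∀ s : B ⟶ E, s ≫ p ≠ 𝟙 B := by
  simp only [ext1Zero, not_forall, not_exists]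
  constructor
  · rintro ⟨E, i, p, hi, hp, hip, hs⟩
    exact ⟨E, i, p, ⟨hi, hp, hip⟩, hs⟩
  · rintro ⟨E, i, p, ⟨hi, hp, hip⟩, hs⟩
    exact ⟨E, i, p, hi, hp, hip, hs⟩

lemma exists_comp_eq_of_surjective {X Y Z : ModuleCat.{0} Λ} {p : X ⟶ Y}
    (hp : Function.Surjective p) {g : X ⟶ Z} (h : LinearMap.ker p.hom ≤ LinearMap.ker g.hom) :
    ∃ t : Y ⟶ Z, p ≫ t = g := by
  refine ⟨ModuleCat.ofHom (((LinearMap.ker p.hom).liftQ g.hom h).comp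
    (p.hom.quotKerEquivOfSurjective hp).symm.toLinearMap), ?_⟩
  ext x
  simp

namespace IsSES

variable {A E B : ModuleCat.{0} Λ} {i : A ⟶ E} {p : E ⟶ B}

lemma exact (h : IsSES i p) : Function.Exact i.hom p.hom :=
  LinearMap.exact_iff.mpr h.range_eq_ker.symm

lemma comp_eq_zero (h : IsSES i p) : i ≫ p = 0 := by
  ext a
  exact h.exact.apply_apply_eq_zero a

lemma exists_desc (h : IsSES i p) {Z : ModuleCat.{0} Λ} (f : E ⟶ Z) (hf : i ≫ f = 0) :
    ∃ t : B ⟶ Z, p ≫ t = f := by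
  refine exists_comp_eq_of_surjective h.surjective fun e he => ?_
  rw [← h.range_eq_ker] at he
  obtain ⟨a, rfl⟩ := he
  exact congr($hf a)

lemma exists_lift (h : IsSES i p) {Z : ModuleCat.{0} Λ} (f : Z ⟶ E) (hf : f ≫ p = 0) :
    ∃ g : Z ⟶ A, g ≫ i = f := by
  have hmem (z : Z) : f z ∈ LinearMap.range i.hom := h.range_eq_ker ▸ congr($hf z)
  refine ⟨ModuleCat.ofHom ((LinearEquiv.ofInjective i.hom h.injective).symm.toLinearMap ∘ₗ
    f.hom.codRestrict _ hmem), ?_⟩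
  ext z
  simp

lemma exists_section_of_retraction (h : IsSES i p) {r : E ⟶ A} (hr : i ≫ r = 𝟙 A) :
    ∃ s : B ⟶ E, s ≫ p = 𝟙 B := by
  obtain ⟨s, hs⟩ := ((h.exact.split_tfae h.injective h.surjective).out 0 1 rfl rfl).mpr
    ⟨r.hom, congrArg ModuleCat.Hom.hom hr⟩
  exact ⟨ModuleCat.ofHom s, ModuleCat.hom_ext hs⟩

lemma length_eq (h : IsSES i p) :
    Module.length Λ E = Module.length Λ A + Module.length Λ B :=
  Module.length_eq_add_of_exact _ _ h.injective h.surjective h.exact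

end IsSES

lemma exists_ses_pushout {X A B F : ModuleCat.{0} Λ} [Module.Finite Λ X]
    {P : Type} [AddCommGroup P] [Module Λ P] [Module.Finite Λ P]
    (π : X ⟶ A) {iF : A ⟶ F} {pF : F ⟶ B} (hiF : iF ≫ pF = 0)
    {q : P →ₗ[Λ] B} (hq : Function.Surjective q) {h : P →ₗ[Λ] F} (hh : pF.hom ∘ₗ h = q)
    (g : LinearMap.ker q →ₗ[Λ] X) (hg : ∀ z, iF (π (g z)) = h z) :
    ∃ (X' : ModuleCat.{0} Λ) (ι : X ⟶ X') (p : X' ⟶ B) (Φ : X' ⟶ F),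
      Module.Finite Λ X' ∧ IsSES ι p ∧ ι ≫ Φ = π ≫ iF ∧ Φ ≫ pF = p := by
  set W := LinearMap.range (g.prod (-(LinearMap.ker q).subtype))
  have hqW : W ≤ LinearMap.ker (q ∘ₗ LinearMap.snd Λ X P) := by
    rintro _ ⟨z, rfl⟩
    simp
  have hΦW : W ≤ LinearMap.ker
      (iF.hom ∘ₗ π.hom ∘ₗ LinearMap.fst Λ X P + h ∘ₗ LinearMap.snd Λ X P) := by
    rintro _ ⟨z, rfl⟩
    simp [hg]
  refine ⟨ModuleCat.of Λ ((X × P) ⧸ W), ModuleCat.ofHom (W.mkQ ∘ₗ LinearMap.inl Λ X P),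
    ModuleCat.ofHom (W.liftQ _ hqW), ModuleCat.ofHom (W.liftQ _ hΦW),
    Module.Finite.of_surjective W.mkQ W.mkQ_surjective, ⟨?_, ?_, ?_⟩, ?_, ?_⟩
  · refine (injective_iff_map_eq_zero (W.mkQ ∘ₗ LinearMap.inl Λ X P)).mpr fun x hx => ?_
    obtain ⟨z, hz⟩ := (Submodule.Quotient.mk_eq_zero W).mp hx
    have hz0 : z = 0 := Subtype.ext (neg_eq_zero.mp (congrArg Prod.snd hz))
    simpa [hz0] using (congrArg Prod.fst hz).symm
  · intro b
    obtain ⟨y, rfl⟩ := hq b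
    exact ⟨W.mkQ (0, y), rfl⟩
  · apply le_antisymm
    · rintro _ ⟨x, rfl⟩
      simp
    · intro x' hx'
      obtain ⟨⟨x, y⟩, rfl⟩ := W.mkQ_surjective x'
      have hy : y ∈ LinearMap.ker q := by simpa using hx'
      refine ⟨x + g ⟨y, hy⟩, (Submodule.Quotient.eq W).mpr ⟨⟨y, hy⟩, ?_⟩⟩
      ext <;> simp
  · ext x
    simp
  · refine ModuleCat.hom_ext (Submodule.linearMap_qext W (LinearMap.ext fun ⟨x, y⟩ => ?_))
    have hx : pF (iF (π x)) = 0 := congr($hiF (π x))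
    simpa [← hh] using hx

/-- Over a hereditary ring `Ext¹(B, -)` is right exact: the class of `F` lifts along `π`,
computed from a finite presentation of `B` whose kernel is projective. -/
lemma exists_ses_lift (hered : IsHereditary Λ) {X A B F : ModuleCat.{0} Λ}
    [Module.Finite Λ X] [Module.Finite Λ B] {π : X ⟶ A} (hπ : Function.Surjective π)
    {iF : A ⟶ F} {pF : F ⟶ B} (hF : IsSES iF pF) :
    ∃ (X' : ModuleCat.{0} Λ) (ι : X ⟶ X') (p : X' ⟶ B) (Φ : X' ⟶ F),
      Module.Finite Λ X' ∧ IsSES ι p ∧ ι ≫ Φ = π ≫ iF ∧ Φ ≫ pF = p := by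
  obtain ⟨d, q, hq⟩ := Module.Finite.exists_fin' Λ B
  have : Module.Projective Λ (LinearMap.ker q) :=
    hered (ModuleCat.of Λ (Fin d → Λ)) inferInstance (LinearMap.ker q)
  obtain ⟨h, hh⟩ := Module.projective_lifting_property pF.hom q hF.surjective
  have hmem (z : LinearMap.ker q) : h z ∈ LinearMap.range iF.hom := by
    rw [hF.range_eq_ker, LinearMap.mem_ker, ← LinearMap.comp_apply, hh]
    exact z.2
  obtain ⟨g, hg⟩ := Module.projective_lifting_property π.hom
    ((LinearEquiv.ofInjective iF.hom hF.injective).symm.toLinearMap ∘ₗ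
      (h ∘ₗ (LinearMap.ker q).subtype).codRestrict _ hmem) hπ
  refine exists_ses_pushout π hF.comp_eq_zero hq hh g fun z => ?_
  have hz := congr($hg z)
  simp only [LinearMap.comp_apply] at hz
  simp [hz, LinearMap.codRestrict]

/-- Since `π` is onto, the square `ι ≫ Φ = π ≫ iF` is a pushout. -/
lemma exists_comp_eq_of_pushout {X X' A B F Z : ModuleCat.{0} Λ} {ι : X ⟶ X'} {p : X' ⟶ B}
    {π : X ⟶ A} {iF : A ⟶ F} {pF : F ⟶ B} {Φ : X' ⟶ F} (hι : IsSES ι p) (hF : IsSES iF pF)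
    (hπ : Function.Surjective π) (hιΦ : ι ≫ Φ = π ≫ iF) (hΦp : Φ ≫ pF = p)
    {f : X' ⟶ Z} {u : A ⟶ Z} (hfu : ι ≫ f = π ≫ u) : ∃ v : F ⟶ Z, iF ≫ v = u := by
  have hΦ : Function.Surjective Φ := by
    intro y
    obtain ⟨x', hx'⟩ := hι.surjective (pF y)
    have hy : y - Φ x' ∈ LinearMap.range iF.hom := by
      rw [hF.range_eq_ker, LinearMap.mem_ker, map_sub, ← hx', ← hΦp]
      exact sub_self _
    obtain ⟨a, ha⟩ := hy
    obtain ⟨x, rfl⟩ := hπ a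
    refine ⟨x' + ι x, ?_⟩
    have hx : Φ (ι x) = iF (π x) := congr($hιΦ x)
    rw [map_add, hx, ha]
    abel
  have hker : LinearMap.ker Φ.hom ≤ LinearMap.ker f.hom := by
    intro x' hx'
    have hpx' : x' ∈ LinearMap.ker p.hom := by
      rw [LinearMap.mem_ker, ← hΦp]
      exact congr(pF.hom $hx').trans (map_zero _)
    rw [← hι.range_eq_ker] at hpx'
    obtain ⟨x, rfl⟩ := hpx'
    have hπx : π x = 0 :=
      hF.injective (by rw [← ConcreteCategory.comp_apply, ← hιΦ, map_zero]; exact hx')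
    show f (ι x) = 0
    rw [← ConcreteCategory.comp_apply, hfu, ConcreteCategory.comp_apply, hπx, map_zero]
  obtain ⟨v, hv⟩ := exists_comp_eq_of_surjective hΦ hker
  refine ⟨v, (ModuleCat.epi_iff_surjective π).mpr hπ |>.left_cancellation _ _ ?_⟩
  rw [← Category.assoc, ← hιΦ, Category.assoc, hv, hfu]

lemma IsSES.eq_zero_of_idem {X X' B : ModuleCat.{0} Λ} (hX : Indec X) {ι : X ⟶ X'} {p : X' ⟶ B}
    (hι : IsSES ι p) (hns : ∀ s : B ⟶ X', s ≫ p ≠ 𝟙 B)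
    {e : End X'} (he : e ≫ e = e) (hep : e ≫ p = 0) : e = 0 := by
  obtain ⟨g, rfl⟩ := hι.exists_lift e hep
  have hmono : Mono ι := (ModuleCat.mono_iff_injective ι).mpr hι.injective
  have hg : g ≫ ι ≫ g = g := by
    rw [← cancel_mono ι]
    simpa only [Category.assoc] using he
  rcases hX.2 (ι ≫ g) (by simp only [End.mul_def, Category.assoc, hg]) with h0 | h1
  · rw [← hg, Category.assoc, h0, Limits.zero_comp, Limits.comp_zero]
  · obtain ⟨s, hs⟩ := hι.exists_section_of_retraction h1
    exact absurd hs (hns s)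

lemma length_ne_top (K : Type) [Field K] [Algebra K Λ] [FiniteDimensional K Λ]
    (X : ModuleCat.{0} Λ) [Module.Finite Λ X] : Module.length Λ X ≠ ⊤ := by
  have : IsArtinianRing Λ := IsArtinianRing.of_finite K Λ
  have : IsNoetherianRing Λ := isNoetherian_of_tower K inferInstance
  exact Module.length_ne_top

lemma not_strictMono_length (hfin : FiniteRepType Λ) {X : ℕ → ModuleCat.{0} Λ}
    (hX : ∀ n, Module.Finite Λ (X n)) (hind : ∀ n, Indec (X n)) :
    ¬ StrictMono fun n => Module.length Λ (X n) := by
  obtain ⟨N, rep, hrep⟩ := hfin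
  choose idx hidx using fun n => hrep (X n) (hX n) (hind n)
  obtain ⟨a, b, hab, hne⟩ : ∃ a b, idx a = idx b ∧ a ≠ b := by
    simpa [Function.Injective] using not_injective_infinite_finite idx
  refine fun hmono => hne (hmono.injective ?_)
  simp only [(hidx a).some.toLinearEquiv.length_eq, (hidx b).some.toLinearEquiv.length_eq]
  rw [hab]

section Stage

variable {I : Type} {M : I → ModuleCat.{0} Λ}

/-- The module reached after `n` steps of iterated extension along a walk ending at `j`,
with the invariants that survive one more non-split extension. -/
structure Stage (M : I → ModuleCat.{0} Λ) (j : I) where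
  X : ModuleCat.{0} Λ
  π : X ⟶ M j
  finite : Module.Finite Λ X
  surjective : Function.Surjective π
  homZero_of_ne : ∀ i ≠ j, homZero X (M i)
  exists_eq_comp : ∀ f : X ⟶ M j, ∃ u, f = π ≫ u
  eq_zero_of_idem : ∀ e : End X, e ≫ e = e → e ≫ π = 0 → e = 0

namespace Stage

variable {j : I}

lemma indec (T : Stage M j) (hj : IsExceptional (M j)) : Indec T.X := by
  have : Epi T.π := (ModuleCat.epi_iff_surjective T.π).mpr T.surjective
  refine ⟨fun h01 => hj.2.2.1 ?_, fun f hf => ?_⟩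
  · rw [← cancel_epi T.π]
    calc T.π ≫ (0 : End (M j)) = (0 : End T.X) ≫ T.π := by simp
      _ = T.π ≫ (1 : End (M j)) := by rw [h01]; simp
  · obtain ⟨u, hu⟩ := T.exists_eq_comp (f ≫ T.π)
    have hf' : f ≫ f = f := hf
    have huu : u ≫ u = u := by
      rw [← cancel_epi T.π, ← reassoc_of% hu, ← hu, ← Category.assoc, hf']
    rcases IsExceptional.eq_zero_or_eq_one_of_idem hj huu with rfl | rfl
    · exact Or.inl (T.eq_zero_of_idem f hf' (by simpa using hu))
    · have h1f : (1 - f) ≫ T.π = 0 := by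
        rw [Preadditive.sub_comp, hu]
        simp
      exact Or.inr (sub_eq_zero.mp (T.eq_zero_of_idem _ (IsIdempotentElem.one_sub hf) h1f)).symm

def base (hj : IsExceptional (M j)) (horth : ∀ i ≠ j, homZero (M j) (M i)) : Stage M j where
  X := M j
  π := 𝟙 _
  finite := hj.1
  surjective := Function.surjective_id
  homZero_of_ne := horth
  exists_eq_comp f := ⟨f, (Category.id_comp f).symm⟩
  eq_zero_of_idem e _ he := by simpa using he

lemma exists_extend (hered : IsHereditary Λ) (hexc : ∀ i, IsExceptional (M i))
    (horth : ∀ i i', i ≠ i' → HomOrth (M i) (M i')) (T : Stage M j) {j' : I} (hj' : j' ≠ j)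
    {F : ModuleCat.{0} Λ} {iF : M j ⟶ F} {pF : F ⟶ M j'} (hF : IsSES iF pF)
    (hns : ∀ s : M j' ⟶ F, s ≫ pF ≠ 𝟙 (M j')) :
    ∃ T' : Stage M j', Module.length Λ T'.X = Module.length Λ T.X + Module.length Λ (M j') := by
  have := T.finite
  have := (hexc j').1
  obtain ⟨X', ι, p, Φ, hX', hι, hιΦ, hΦp⟩ := exists_ses_lift hered T.surjective hF
  -- for `i = j`, an invertible `u` would split `F` through the pushout
  have hιf (i : I) (f : X' ⟶ M i) : ι ≫ f = 0 := by
    by_cases hi : i = j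
    · subst hi
      obtain ⟨u, hu⟩ := T.exists_eq_comp (ι ≫ f)
      rcases eq_or_ne u 0 with rfl | hu0
      · simpa using hu
      obtain ⟨v, hv⟩ := exists_comp_eq_of_pushout hι hF T.surjective hιΦ hΦp hu
      obtain ⟨w, hw⟩ := ((hexc i).2.2.2 u hu0).exists_left_inv
      obtain ⟨s, hs⟩ := hF.exists_section_of_retraction (r := v ≫ w)
        (by rw [← Category.assoc, hv]; exact hw)
      exact absurd hs (hns s)
    · exact T.homZero_of_ne i hi _
  refine ⟨⟨X', p, hX', hι.surjective, fun i hi f => ?_, fun f => ?_, fun e he hep => ?_⟩,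
    hι.length_eq⟩
  · obtain ⟨t, rfl⟩ := hι.exists_desc f (hιf i f)
    rw [(horth j' i hi.symm).1 t, Limits.comp_zero]
  · obtain ⟨t, ht⟩ := hι.exists_desc f (hιf j' f)
    exact ⟨t, ht.symm⟩
  · refine hι.eq_zero_of_idem (T.indec (hexc j)) (fun s hs => hns (s ≫ Φ) ?_) he hep
    rw [Category.assoc, hΦp, hs]

end Stage

lemma exists_stages_strictMono_length (K : Type) [Field K] [Algebra K Λ] [FiniteDimensional K Λ]
    (hered : IsHereditary Λ) (hexc : ∀ i, IsExceptional (M i))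
    (horth : ∀ i i', i ≠ i' → HomOrth (M i) (M i')) {c : ℕ → I} (hc : ∀ n, c (n + 1) ≠ c n)
    (hext : ∀ n, ¬ ext1Zero (M (c (n + 1))) (M (c n))) :
    ∃ T : ∀ n, Stage M (c n), StrictMono fun n => Module.length Λ (T n).X := by
  have step (n : ℕ) (T : Stage M (c n)) :
      ∃ T' : Stage M (c (n + 1)), Module.length Λ T.X < Module.length Λ T'.X := by
    obtain ⟨F, iF, pF, hF, hns⟩ := not_ext1Zero_iff.mp (hext n)
    obtain ⟨T', hT'⟩ := T.exists_extend hered hexc horth (hc n) hF hns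
    have := T.finite
    have := (hexc (c (n + 1))).nontrivial_s11
    refine ⟨T', hT' ▸ ?_⟩
    simpa using (ENat.add_lt_add_iff_left (length_ne_top K T.X) (n := 0)
      (m := Module.length Λ (M (c (n + 1))))).mpr Module.length_pos
  choose next hnext using step
  let T (n : ℕ) : Stage M (c n) :=
    Nat.rec (Stage.base (hexc (c 0)) fun i hi => (horth (c 0) i hi.symm).1) next n
  exact ⟨T, strictMono_nat_of_lt_succ fun n => hnext n (T n)⟩

theorem wellFounded_not_excPair (K : Type) [Field K] [Algebra K Λ] [FiniteDimensional K Λ]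
    (hered : IsHereditary Λ) (hfin : FiniteRepType Λ) (hexc : ∀ i, IsExceptional (M i))
    (horth : ∀ i i', i ≠ i' → HomOrth (M i) (M i')) :
    WellFounded fun i' i => i ≠ i' ∧ ¬ ExcPair (M i) (M i') := by
  refine wellFounded_iff_isEmpty_descending_chain.mpr ⟨fun ⟨c, hc⟩ => ?_⟩
  have hext (n : ℕ) : ¬ ext1Zero (M (c (n + 1))) (M (c n)) :=
    fun h => (hc n).2 ⟨(horth _ _ (hc n).1).2, h⟩
  obtain ⟨T, hT⟩ :=
    exists_stages_strictMono_length K hered hexc horth (fun n => (hc n).1.symm) hext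
  exact not_strictMono_length hfin (fun n => (T n).finite) (fun n => (T n).indec (hexc _)) hT

end Stage

theorem exists_perm_excPair (K : Type) [Field K] [Algebra K Λ] [FiniteDimensional K Λ]
    (hered : IsHereditary Λ) (hfin : FiniteRepType Λ) {k : ℕ} {M : Fin k → ModuleCat.{0} Λ}
    (hexc : ∀ i, IsExceptional (M i)) (horth : ∀ i i', i ≠ i' → HomOrth (M i) (M i')) :
    ∃ σ : Equiv.Perm (Fin k), ∀ i i', i < i' → ExcPair (M (σ i)) (M (σ i')) := by
  have := IsWellFounded.mk (wellFounded_not_excPair K hered hfin hexc horth)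
  let rank := IsWellFounded.rank fun i' i : Fin k => i ≠ i' ∧ ¬ ExcPair (M i) (M i')
  refine ⟨Tuple.sort rank, fun i i' hii' => by_contra fun h => ?_⟩
  have hne : Tuple.sort rank i ≠ Tuple.sort rank i' := (Tuple.sort rank).injective.ne hii'.ne
  exact (IsWellFounded.rank_lt_of_rel ⟨hne, h⟩).not_ge (Tuple.monotone_sort rank hii'.le)

end HereditaryExceptional

theorem stmt11_general (K Λ : Type) [Field K] [Ring Λ] [Algebra K Λ] [FiniteDimensional K Λ]
    (hered : IsHereditary Λ) (hfin : FiniteRepType Λ)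
    (k l : ℕ) (M : Fin k → ModuleCat.{0} Λ) (N : Fin l → ModuleCat.{0} Λ)
    (hexcM : ∀ i, IsExceptional (M i)) (hexcN : ∀ j, IsExceptional (N j))
    (horthM : ∀ i j, i ≠ j → HomOrth (M i) (M j))
    (horthN : ∀ i j, i ≠ j → HomOrth (N i) (N j))
    (hcross : ∀ i j, ExcPair (M i) (N j)) :
    ∃ (σ : Equiv.Perm (Fin k)) (τ : Equiv.Perm (Fin l)),
      (∀ i j : Fin k, i < j → ExcPair (M (σ i)) (M (σ j))) ∧
      (∀ i j : Fin l, i < j → ExcPair (N (τ i)) (N (τ j))) ∧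
      (∀ (i : Fin k) (j : Fin l), ExcPair (M (σ i)) (N (τ j))) := by
  obtain ⟨σ, hσ⟩ := HereditaryExceptional.exists_perm_excPair K hered hfin hexcM horthM
  obtain ⟨τ, hτ⟩ := HereditaryExceptional.exists_perm_excPair K hered hfin hexcN horthN
  exact ⟨σ, τ, hσ, hτ, fun i j => hcross (σ i) (τ j)⟩

/-- Over a finite-dimensional hereditary algebra of finite representation
type: given exceptional modules `M₁,…,M_k` and `N₁,…,N_l`, each family pairwise Hom-orthogonal
with every pair exceptional in at least one order, and with `(M_i, N_j)` an exceptional pair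
for all `i, j`, the modules can be arranged into an exceptional sequence with all of the `N`'s
to the right of all of the `M`'s. -/
theorem stmt11 (K Λ : Type) [Field K] [Ring Λ] [Algebra K Λ] [FiniteDimensional K Λ]
    (hered : IsHereditary Λ) (hfin : FiniteRepType Λ)
    (k l : ℕ) (M : Fin k → ModuleCat.{0} Λ) (N : Fin l → ModuleCat.{0} Λ)
    (hexcM : ∀ i, IsExceptional (M i)) (hexcN : ∀ j, IsExceptional (N j))
    (horthM : ∀ i j, i ≠ j → HomOrth (M i) (M j))
    (hpairM : ∀ i j, i ≠ j → ExcPair (M i) (M j) ∨ ExcPair (M j) (M i))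
    (horthN : ∀ i j, i ≠ j → HomOrth (N i) (N j))
    (hpairN : ∀ i j, i ≠ j → ExcPair (N i) (N j) ∨ ExcPair (N j) (N i))
    (hcross : ∀ i j, ExcPair (M i) (N j)) :
    ∃ (σ : Equiv.Perm (Fin k)) (τ : Equiv.Perm (Fin l)),
      (∀ i j : Fin k, i < j → ExcPair (M (σ i)) (M (σ j))) ∧
      (∀ i j : Fin l, i < j → ExcPair (N (τ i)) (N (τ j))) ∧
      (∀ (i : Fin k) (j : Fin l), ExcPair (M (σ i)) (N (τ j))) :=
  stmt11_general K Λ hered hfin k l M N hexcM hexcN horthM horthN hcross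
end
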